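/- arXiv:1703.08998 — 3 statements merged into one kernel-verified Lean document; each statement's English description precedes it below -/
import Mathlib

section
/- For every integer k ≥ 1, any two distinct connected components of C_k are separated by a gap of length at least (1/N)·((N-1)/(2N))^{k-1}. -/
open Set

/-- ratio (N-1)/(2N) of each half of the middle-1/N Cantor construction -/
noncomputable def cantorRatio (N : ℕ) : ℝ := (N - 1) / (2 * N)

/-- k-th stage C_k of the middle 1/N Cantor set -/
noncomputable def cantorStage (N : ℕ) : ℕ → Set ℝ
  | 0 => Set.Icc 0 1
  | k + 1 => (fun x => cantorRatio N * x) '' cantorStage N k ∪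
      (fun x => cantorRatio N * x + (N + 1) / (2 * N)) '' cantorStage N k

/-- the middle 1/N Cantor set -/
noncomputable def middleCantorSet (N : ℕ) : Set ℝ := ⋂ k, cantorStage N k

/-- number of stages whose removed middle intervals have length at least δ -/
noncomputable def numStages (N : ℕ) (δ : ℝ) : ℕ :=
  sSup {j : ℕ | δ ≤ 1 / N * cantorRatio N ^ (j - 1)}

/-- X_δ : perform only the removal steps removing intervals of length ≥ δ -/
noncomputable def cantorApprox (N : ℕ) (δ : ℝ) : Set ℝ := cantorStage N (numStages N δ)

/-!
`C_{k+1}` is the union of two copies of `C_k` scaled by `r = (N-1)/(2N)`, one inside `[0, r]`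
and one inside `[1 - r, 1]`, and these two intervals are `1/N` apart. Two points of `C_{k+1}` in
different components either lie in different copies, and are then at least `1/N` apart, or come
from two points of `C_k` in different components, whose distance gets multiplied by `r`.
-/

theorem ContinuousOn.mem_connectedComponentIn_of_mapsTo {α β : Type*} [TopologicalSpace α]
    [TopologicalSpace β] {f : α → β} {s : Set α} {t : Set β} {a b : α} (hf : ContinuousOn f s)
    (hst : MapsTo f s t) (hb : b ∈ connectedComponentIn s a) :
    f b ∈ connectedComponentIn t (f a) := by
  have ha : a ∈ s := connectedComponentIn_nonempty_iff.mp ⟨b, hb⟩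
  exact connectedComponentIn_mono _ hst.image_subset
    (hf.image_connectedComponentIn_subset ha ⟨b, hb, rfl⟩)

theorem ContinuousOn.connectedComponentIn_ne_of_mapsTo {α β : Type*} [TopologicalSpace α]
    [TopologicalSpace β] {f : α → β} {s : Set α} {t : Set β} {a b : α} (hf : ContinuousOn f s)
    (hst : MapsTo f s t) (hb : b ∈ s)
    (h : connectedComponentIn t (f a) ≠ connectedComponentIn t (f b)) :
    connectedComponentIn s a ≠ connectedComponentIn s b := fun hab =>
  h <| connectedComponentIn_eq <|
    hf.mem_connectedComponentIn_of_mapsTo hst (hab ▸ mem_connectedComponentIn hb)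

section

variable {N : ℕ}

theorem cantorRatio_nonneg (hN : 0 < N) : 0 ≤ cantorRatio N := by
  have : (1 : ℝ) ≤ N := by exact_mod_cast hN
  unfold cantorRatio
  apply div_nonneg <;> linarith

theorem cantorRatio_le_one : cantorRatio N ≤ 1 :=
  div_le_one_of_le₀ (by linarith [N.cast_nonneg (α := ℝ)]) (by positivity)

theorem cantorRatio_add_offset (hN : 0 < N) : cantorRatio N + (N + 1) / (2 * N) = 1 := by
  have : (N : ℝ) ≠ 0 := by exact_mod_cast hN.ne'
  unfold cantorRatio
  field_simp
  ring

theorem offset_sub_cantorRatio (hN : 0 < N) : (N + 1) / (2 * N) - cantorRatio N = 1 / N := by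
  have : (N : ℝ) ≠ 0 := by exact_mod_cast hN.ne'
  unfold cantorRatio
  field_simp
  ring

theorem mapsTo_mul_cantorRatio (hN : 0 < N) :
    MapsTo (fun x => cantorRatio N * x) (Icc 0 1) (Icc 0 (cantorRatio N)) := fun _ ⟨h0, h1⟩ =>
  ⟨mul_nonneg (cantorRatio_nonneg hN) h0, mul_le_of_le_one_right (cantorRatio_nonneg hN) h1⟩

theorem mapsTo_mul_cantorRatio_add_offset (hN : 0 < N) :
    MapsTo (fun x => cantorRatio N * x + (N + 1) / (2 * N)) (Icc 0 1)
      (Icc ((N + 1) / (2 * N)) 1) := fun x hx => by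
  obtain ⟨h0, h1⟩ := mapsTo_mul_cantorRatio hN hx
  constructor <;> linarith [cantorRatio_add_offset hN]

theorem cantorStage_subset_Icc (hN : 0 < N) (k : ℕ) : cantorStage N k ⊆ Icc 0 1 := by
  induction k with
  | zero => exact subset_rfl
  | succ k ih =>
    have hr := cantorRatio_le_one (N := N)
    have hc := cantorRatio_add_offset hN
    refine union_subset ?_ ?_
    · exact ((mapsTo_mul_cantorRatio hN).mono_left ih).image_subset.trans
        (Icc_subset_Icc le_rfl hr)
    · exact ((mapsTo_mul_cantorRatio_add_offset hN).mono_left ih).image_subset.trans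
        (Icc_subset_Icc (by linarith) le_rfl)

theorem one_div_le_abs_left_sub_right (hN : 0 < N) {k : ℕ} {a b : ℝ}
    (ha : a ∈ cantorStage N k) (hb : b ∈ cantorStage N k) :
    1 / N ≤ |cantorRatio N * a - (cantorRatio N * b + (N + 1) / (2 * N))| := by
  obtain ⟨-, hu⟩ := mapsTo_mul_cantorRatio hN (cantorStage_subset_Icc hN k ha)
  obtain ⟨hv, -⟩ := mapsTo_mul_cantorRatio_add_offset hN (cantorStage_subset_Icc hN k hb)
  rw [abs_sub_comm]
  exact le_trans (by linarith [offset_sub_cantorRatio hN]) (le_abs_self _)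

theorem cantorStage_succ_far_or_scaled (hN : 0 < N) {k : ℕ} {x y : ℝ}
    (hx : x ∈ cantorStage N (k + 1)) (hy : y ∈ cantorStage N (k + 1))
    (h : connectedComponentIn (cantorStage N (k + 1)) x ≠
      connectedComponentIn (cantorStage N (k + 1)) y) :
    1 / N ≤ |x - y| ∨ ∃ a ∈ cantorStage N k, ∃ b ∈ cantorStage N k,
      connectedComponentIn (cantorStage N k) a ≠ connectedComponentIn (cantorStage N k) b ∧
      |x - y| = cantorRatio N * |a - b| := by
  have hr := cantorRatio_nonneg hN
  have hcomp (f : ℝ → ℝ) (hf : Continuous f) (hmaps : MapsTo f (cantorStage N k) _)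
      {a b : ℝ} (hb : b ∈ cantorStage N k)
      (h : connectedComponentIn (cantorStage N (k + 1)) (f a) ≠
        connectedComponentIn (cantorStage N (k + 1)) (f b)) :
      connectedComponentIn (cantorStage N k) a ≠ connectedComponentIn (cantorStage N k) b :=
    hf.continuousOn.connectedComponentIn_ne_of_mapsTo hmaps hb h
  rcases hx with ⟨a, ha, rfl⟩ | ⟨a, ha, rfl⟩ <;> rcases hy with ⟨b, hb, rfl⟩ | ⟨b, hb, rfl⟩
  · refine .inr ⟨a, ha, b, hb, hcomp _ (by fun_prop) (fun a ha => .inl ⟨a, ha, rfl⟩) hb h, ?_⟩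
    rw [← mul_sub, abs_mul, abs_of_nonneg hr]
  · exact .inl (one_div_le_abs_left_sub_right hN ha hb)
  · exact .inl (by rw [abs_sub_comm]; exact one_div_le_abs_left_sub_right hN hb ha)
  · refine .inr ⟨a, ha, b, hb, hcomp _ (by fun_prop) (fun a ha => .inr ⟨a, ha, rfl⟩) hb h, ?_⟩
    rw [add_sub_add_right_eq_sub, ← mul_sub, abs_mul, abs_of_nonneg hr]

theorem cantorStage_succ_gap (hN : 0 < N) (k : ℕ) {x y : ℝ}
    (hx : x ∈ cantorStage N (k + 1)) (hy : y ∈ cantorStage N (k + 1))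
    (h : connectedComponentIn (cantorStage N (k + 1)) x ≠
      connectedComponentIn (cantorStage N (k + 1)) y) :
    1 / N * cantorRatio N ^ k ≤ |x - y| := by
  have hr := cantorRatio_nonneg hN
  induction k generalizing x y with
  | zero =>
    rcases cantorStage_succ_far_or_scaled hN hx hy h with hfar | ⟨a, ha, b, hb, hab, -⟩
    · simpa using hfar
    · exact absurd ((isPreconnected_Icc.connectedComponentIn ha).trans
        (isPreconnected_Icc.connectedComponentIn hb).symm) hab
  | succ k ih =>
    rcases cantorStage_succ_far_or_scaled hN hx hy h with hfar | ⟨a, ha, b, hb, hab, hxy⟩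
    · refine le_trans ?_ hfar
      exact mul_le_of_le_one_right (by positivity) (pow_le_one₀ hr cantorRatio_le_one)
    · rw [hxy, pow_succ']
      calc 1 / N * (cantorRatio N * cantorRatio N ^ k)
          = cantorRatio N * (1 / N * cantorRatio N ^ k) := by ring
        _ ≤ cantorRatio N * |a - b| := mul_le_mul_of_nonneg_left (ih ha hb hab) hr

end

theorem stmt1 (N : ℕ) (hN : 3 ≤ N) (k : ℕ) (hk : 1 ≤ k)
    (x y : ℝ) (hx : x ∈ cantorStage N k) (hy : y ∈ cantorStage N k)
    (h : connectedComponentIn (cantorStage N k) x ≠ connectedComponentIn (cantorStage N k) y) :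
    1 / N * cantorRatio N ^ (k - 1) ≤ |x - y| := by
  obtain ⟨m, rfl⟩ : ∃ m, k = m + 1 := ⟨k - 1, by omega⟩
  simpa using cantorStage_succ_gap (by omega) m hx hy h
end

section
/- Let L > k be positive integers, let J be an interval of length ((N-1)/(2N))^k, and let I_1, …, I_{2^{L-1}} be the open intervals removed from C_{L-1} to obtain C_L. Then the number of indices r with I_r ∩ J ≠ ∅ is at most 2^{L-k-1}. -/
open Set

/-!
Write `r = (N - 1) / (2N)` and `m = L - 1 = k + n`. The components of `C_m` are the intervals
`[x, x + r^m]`, `x ∈ E_m`, where `E_{m+1} = r E_m ∪ (r E_m + 1 - r)`, and passing to `C_{m+1}`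
removes from each of them the gap `(x + r^(m+1), x + (1 - r) r^m)`. The `2^m` intervals `I_j` are
connected and exactly cover these `2^m` disjoint open gaps, so each lies in a gap of its own and it
suffices to count the gaps meeting `J`. Their left endpoints are pairwise closer than
`r^k + (1 - 2r) r^m`. Now `E_{k+n} = E_k + r^k E_n`, and distinct points of `E_k` are at least
`(1 - r) r^(k-1)` apart, which is more than that; so each `z ∈ E_n` accounts for at most one such
gap, and there are at most `|E_n| = 2^n` of them.
-/

lemma Set.Icc_sdiff_Icc_union_Icc {α : Type*} [LinearOrder α] {a b c d : α} (hab : a ≤ b)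
    (hcd : c ≤ d) : Icc a d \ (Icc a b ∪ Icc c d) = Ioo b c := by
  ext t
  simp only [mem_sdiff, mem_union, mem_Icc, mem_Ioo, not_or, not_and, not_le]
  constructor
  · rintro ⟨⟨hat, htd⟩, hb, hc⟩
    exact ⟨hb hat, lt_of_not_ge fun h => (hc h).not_ge htd⟩
  · rintro ⟨hbt, htc⟩
    exact ⟨⟨hab.trans hbt.le, htc.le.trans hcd⟩, fun _ => hbt, fun h => absurd h htc.not_ge⟩

lemma Set.biUnion_sdiff_biUnion_of_pairwiseDisjoint {ι α : Type*} {s : Set ι}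
    {A B : ι → Set α} (hA : s.PairwiseDisjoint A) (hBA : ∀ i ∈ s, B i ⊆ A i) :
    (⋃ i ∈ s, A i) \ ⋃ i ∈ s, B i = ⋃ i ∈ s, A i \ B i := by
  ext t
  simp only [mem_sdiff, mem_iUnion₂, not_exists]
  constructor
  · rintro ⟨⟨i, hi, htA⟩, htB⟩
    exact ⟨i, hi, htA, htB i hi⟩
  · rintro ⟨i, hi, htA, htB⟩
    refine ⟨⟨i, hi, htA⟩, fun j hj htBj => ?_⟩
    obtain rfl | hij := eq_or_ne i j
    · exact htB htBj
    · exact (hA hi hj hij).le_bot ⟨htA, hBA j hj htBj⟩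

lemma exists_equiv_forall_subset_of_iUnion_eq {α ι κ : Type*} [TopologicalSpace α] [Finite ι]
    {I : ι → Set α} {G : κ → Set α} (hcard : Nat.card ι = Nat.card κ)
    (hI : ∀ j, IsPreconnected (I j)) (hIne : ∀ j, (I j).Nonempty) (hG : ∀ x, IsOpen (G x))
    (hGne : ∀ x, (G x).Nonempty) (hGdisj : Pairwise (Function.onFun Disjoint G))
    (hIG : ⋃ j, I j = ⋃ x, G x) : ∃ e : ι ≃ κ, ∀ j, I j ⊆ G (e j) := by
  have hmem : ∀ j, ∀ t ∈ I j, ∃ x, t ∈ G x := fun j t ht =>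
    mem_iUnion.mp (hIG ▸ mem_iUnion_of_mem j ht)
  have hsub : ∀ j, ∃ x, I j ⊆ G x := by
    intro j
    obtain ⟨t, ht⟩ := hIne j
    obtain ⟨x, hx⟩ := hmem j t ht
    refine ⟨x, (hI j).subset_left_of_subset_union (hG x)
      (isOpen_biUnion fun y _ => hG y : IsOpen (⋃ y ∈ ({x}ᶜ : Set κ), G y))
      (disjoint_iUnion₂_right.mpr fun y hy => hGdisj (Ne.symm hy)) (fun s hs => ?_)
      ⟨t, ht, hx⟩⟩
    obtain ⟨y, hy⟩ := hmem j s hs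
    obtain rfl | hyx := eq_or_ne y x
    · exact Or.inl hy
    · exact Or.inr (mem_biUnion hyx hy)
  choose f hf using hsub
  have hsurj : Function.Surjective f := by
    intro x
    obtain ⟨t, ht⟩ := hGne x
    obtain ⟨j, hj⟩ := mem_iUnion.mp (hIG.symm ▸ mem_iUnion_of_mem x ht)
    exact ⟨j, by_contra fun hne => (hGdisj hne).le_bot ⟨hf j hj, ht⟩⟩
  exact ⟨.ofBijective f ((Nat.bijective_iff_surjective_and_card f).mpr ⟨hsurj, hcard⟩), hf⟩

noncomputable def cantorLeftEnds (r : ℝ) : ℕ → Finset ℝ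
  | 0 => {0}
  | m + 1 => (cantorLeftEnds r m).image (r * ·) ∪ (cantorLeftEnds r m).image (r * · + (1 - r))

namespace cantorLeftEnds

variable {r : ℝ} {m : ℕ}

lemma succ (r : ℝ) (m : ℕ) : cantorLeftEnds r (m + 1) =
    (cantorLeftEnds r m).image (r * ·) ∪ (cantorLeftEnds r m).image (r * · + (1 - r)) := rfl

lemma add (r : ℝ) (k n : ℕ) : cantorLeftEnds r (k + n) =
    Finset.image₂ (fun y z => y + r ^ k * z) (cantorLeftEnds r k) (cantorLeftEnds r n) := by
  induction k with
  | zero => simp [cantorLeftEnds]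
  | succ k ih =>
    rw [Nat.add_right_comm, succ, ih, succ, Finset.image₂_union_left, Finset.image_image₂,
      Finset.image_image₂, Finset.image₂_image_left, Finset.image₂_image_left]
    congr 1 <;> exact Finset.image₂_congr fun y _ z _ => by ring

lemma succ_eq_union_image (r : ℝ) (m : ℕ) : cantorLeftEnds r (m + 1) =
    cantorLeftEnds r m ∪ (cantorLeftEnds r m).image (· + (1 - r) * r ^ m) := by
  rw [add, show cantorLeftEnds r 1 = {0, 1 - r} by simp [cantorLeftEnds],
    Finset.image₂_insert_right, Finset.image₂_singleton_right]
  simp [mul_comm]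

lemma mem_Icc (hr0 : 0 ≤ r) (hr1 : r ≤ 1) {x : ℝ} (hx : x ∈ cantorLeftEnds r m) :
    x ∈ Icc 0 (1 - r ^ m) := by
  induction m generalizing x with
  | zero => simp_all [cantorLeftEnds]
  | succ m ih =>
    rw [succ, Finset.mem_union, Finset.mem_image, Finset.mem_image] at hx
    rcases hx with ⟨y, hy, rfl⟩ | ⟨y, hy, rfl⟩ <;> obtain ⟨hy0, hy1⟩ := ih hy <;>
      constructor <;> nlinarith [pow_succ r m]

/-- That is, `|x - y| ≥ (1 - r) r^(m-1)`, multiplied through by `r` so that `m = 0` is no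
exception. -/
lemma one_sub_mul_pow_le_mul_abs_sub (hr0 : 0 ≤ r) (hr1 : 2 * r ≤ 1) {x y : ℝ}
    (hx : x ∈ cantorLeftEnds r m) (hy : y ∈ cantorLeftEnds r m) (hxy : x ≠ y) :
    (1 - r) * r ^ m ≤ r * |x - y| := by
  induction m generalizing x y with
  | zero => simp_all [cantorLeftEnds]
  | succ m ih =>
    have hrm : r ^ m ≤ 1 := pow_le_one₀ hr0 (by linarith)
    have across : ∀ a ∈ cantorLeftEnds r m, ∀ b ∈ cantorLeftEnds r m,
        (1 - r) * r ^ (m + 1) ≤ r * |r * a - (r * b + (1 - r))| := by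
      intro a ha b hb
      obtain ⟨-, ha1⟩ := mem_Icc hr0 (by linarith) ha
      obtain ⟨hb0, -⟩ := mem_Icc hr0 (by linarith) hb
      have hgap : 1 - 2 * r + r ^ (m + 1) ≤ r * b + (1 - r) - r * a := by
        nlinarith [mul_le_mul_of_nonneg_left ha1 hr0, mul_nonneg hr0 hb0, pow_succ r m]
      rw [abs_sub_comm, abs_of_nonneg (by linarith [pow_nonneg hr0 (m + 1)])]
      calc (1 - r) * r ^ (m + 1) ≤ r * (1 - 2 * r + r ^ (m + 1)) := by
            have h12 : 0 ≤ r * (1 - 2 * r) := mul_nonneg hr0 (by linarith)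
            nlinarith [mul_le_mul_of_nonneg_left hrm h12, pow_succ r m]
        _ ≤ _ := mul_le_mul_of_nonneg_left hgap hr0
    rw [succ, Finset.mem_union, Finset.mem_image, Finset.mem_image] at hx hy
    rcases hx with ⟨x, hx, rfl⟩ | ⟨x, hx, rfl⟩ <;>
      rcases hy with ⟨y, hy, rfl⟩ | ⟨y, hy, rfl⟩
    · have := ih hx hy (by rintro rfl; exact hxy rfl)
      rw [← mul_sub, abs_mul, abs_of_nonneg hr0]
      nlinarith [pow_succ r m]
    · exact across x hx y hy
    · rw [abs_sub_comm]; exact across y hy x hx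
    · have := ih hx hy (by rintro rfl; exact hxy rfl)
      rw [show r * x + (1 - r) - (r * y + (1 - r)) = r * (x - y) by ring, abs_mul,
        abs_of_nonneg hr0]
      nlinarith [pow_succ r m]

lemma pow_lt_abs_sub (hr0 : 0 < r) (hr1 : 2 * r < 1) {x y : ℝ}
    (hx : x ∈ cantorLeftEnds r m) (hy : y ∈ cantorLeftEnds r m) (hxy : x ≠ y) :
    r ^ m < |x - y| := by
  have := one_sub_mul_pow_le_mul_abs_sub hr0.le hr1.le hx hy hxy
  nlinarith [pow_pos hr0 m]

lemma card (hr0 : 0 < r) (hr1 : 2 * r ≤ 1) (m : ℕ) : (cantorLeftEnds r m).card = 2 ^ m := by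
  induction m with
  | zero => rfl
  | succ m ih =>
    have hdisj : Disjoint ((cantorLeftEnds r m).image (r * ·))
        ((cantorLeftEnds r m).image (r * · + (1 - r))) := by
      simp only [Finset.disjoint_left, Finset.mem_image]
      rintro _ ⟨a, ha, rfl⟩ ⟨b, hb, hab⟩
      obtain ⟨-, ha1⟩ := mem_Icc hr0.le (by linarith) ha
      obtain ⟨hb0, -⟩ := mem_Icc hr0.le (by linarith) hb
      nlinarith [pow_pos hr0 m]
    rw [succ, Finset.card_union_of_disjoint hdisj,
      Finset.card_image_of_injective _ (mul_right_injective₀ hr0.ne'),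
      Finset.card_image_of_injective _ fun a b h => mul_left_cancel₀ hr0.ne' (add_right_cancel h),
      ih, pow_succ, mul_two]

lemma pairwiseDisjoint_Icc (hr0 : 0 < r) (hr1 : 2 * r < 1) (m : ℕ) :
    (cantorLeftEnds r m : Set ℝ).PairwiseDisjoint fun x => Icc x (x + r ^ m) := by
  intro x hx y hy hxy
  refine Set.disjoint_left.mpr fun t ⟨hxt, htx⟩ ⟨hyt, hty⟩ => ?_
  exact (pow_lt_abs_sub hr0 hr1 hx hy hxy).not_ge
    (abs_sub_le_iff.mpr ⟨by linarith, by linarith⟩)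

lemma card_filter_le (hr0 : 0 < r) (hr1 : 2 * r ≤ 1) (k n : ℕ) {p : ℝ → Prop}
    [DecidablePred p] (hp : ∀ u v, p u → p v → r * |u - v| < (1 - r) * r ^ k) :
    ((cantorLeftEnds r (k + n)).filter p).card ≤ 2 ^ n := by
  let fiber (z : ℝ) := ((cantorLeftEnds r k).image (· + r ^ k * z)).filter p
  have hsub : (cantorLeftEnds r (k + n)).filter p ⊆ (cantorLeftEnds r n).biUnion fiber := by
    intro x hx
    rw [Finset.mem_filter, add, Finset.mem_image₂] at hx
    obtain ⟨⟨y, hy, z, hz, rfl⟩, hpx⟩ := hx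
    exact Finset.mem_biUnion.mpr
      ⟨z, hz, Finset.mem_filter.mpr ⟨Finset.mem_image.mpr ⟨y, hy, rfl⟩, hpx⟩⟩
  have hfiber : ∀ z, (fiber z).card ≤ 1 := by
    intro z
    simp only [fiber, Finset.card_le_one, Finset.mem_filter, Finset.mem_image]
    rintro _ ⟨⟨y, hy, rfl⟩, hpy⟩ _ ⟨⟨y', hy', rfl⟩, hpy'⟩
    by_contra hne
    have hsep := one_sub_mul_pow_le_mul_abs_sub hr0.le hr1 hy hy' (by rintro rfl; exact hne rfl)
    have hclose := hp _ _ hpy hpy'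
    rw [add_sub_add_right_eq_sub] at hclose
    linarith
  calc _ ≤ _ := Finset.card_le_card hsub
    _ ≤ ∑ z ∈ cantorLeftEnds r n, (fiber z).card := Finset.card_biUnion_le
    _ ≤ ∑ z ∈ cantorLeftEnds r n, 1 := Finset.sum_le_sum fun z _ => hfiber z
    _ = 2 ^ n := by rw [Finset.sum_const, smul_eq_mul, mul_one, card hr0 hr1]

end cantorLeftEnds

def cantorGap (r : ℝ) (m : ℕ) (x : ℝ) : Set ℝ := Ioo (x + r ^ (m + 1)) (x + (1 - r) * r ^ m)

section cantorGap

variable {r : ℝ} {m : ℕ}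

lemma cantorGap_subset_Icc (hr0 : 0 ≤ r) (x : ℝ) : cantorGap r m x ⊆ Icc x (x + r ^ m) :=
  Ioo_subset_Icc_self.trans <| Icc_subset_Icc (by nlinarith [pow_succ r m, pow_nonneg hr0 m])
    (by nlinarith [pow_nonneg hr0 m])

lemma cantorGap_nonempty (hr0 : 0 < r) (hr1 : 2 * r < 1) (x : ℝ) : (cantorGap r m x).Nonempty :=
  nonempty_Ioo.mpr (by nlinarith [pow_succ r m, pow_pos hr0 m])

lemma pairwise_disjoint_cantorGap (hr0 : 0 < r) (hr1 : 2 * r < 1) (m : ℕ) :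
    Pairwise (Function.onFun Disjoint fun x : cantorLeftEnds r m => cantorGap r m x) :=
  fun x y hxy => ((cantorLeftEnds.pairwiseDisjoint_Icc hr0 hr1 m) x.2 y.2
    (Subtype.coe_ne_coe.mpr hxy)).mono (cantorGap_subset_Icc hr0.le x)
    (cantorGap_subset_Icc hr0.le y)

lemma abs_sub_lt_of_cantorGap_inter_Icc_nonempty {x y a ℓ : ℝ}
    (hx : (cantorGap r m x ∩ Icc a (a + ℓ)).Nonempty)
    (hy : (cantorGap r m y ∩ Icc a (a + ℓ)).Nonempty) :
    |x - y| < ℓ + (1 - 2 * r) * r ^ m := by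
  obtain ⟨s, ⟨hxs, hsx⟩, has, hsa⟩ := hx
  obtain ⟨t, ⟨hyt, hty⟩, hat, hta⟩ := hy
  rw [abs_sub_lt_iff]
  constructor <;> nlinarith [pow_succ r m]

lemma natCard_cantorGap_inter_Icc_nonempty_le (hr0 : 0 < r) (hr1 : 2 * r ≤ 1) (k n : ℕ)
    (a : ℝ) :
    Nat.card {x : cantorLeftEnds r (k + n) //
      (cantorGap r (k + n) x ∩ Icc a (a + r ^ k)).Nonempty} ≤ 2 ^ n := by
  classical
  calc _ ≤ ((cantorLeftEnds r (k + n)).filter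
        fun x => (cantorGap r (k + n) x ∩ Icc a (a + r ^ k)).Nonempty).card := by
        rw [← Nat.card_eq_finsetCard]
        exact Nat.card_le_card_of_injective
          (fun x => ⟨x.1, Finset.mem_filter.mpr ⟨x.1.2, x.2⟩⟩)
          fun x y hxy => Subtype.ext <| Subtype.ext <| Subtype.mk.inj hxy
    _ ≤ 2 ^ n := by
      refine cantorLeftEnds.card_filter_le hr0 hr1 k n fun u v hu hv => ?_
      have hclose := abs_sub_lt_of_cantorGap_inter_Icc_nonempty hu hv
      have hpow := pow_le_pow_of_le_one hr0.le (by linarith) (by omega : k ≤ k + n + 1)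
      nlinarith [mul_lt_mul_of_pos_left hclose hr0,
        mul_le_mul_of_nonneg_left hpow (by linarith : (0 : ℝ) ≤ 1 - 2 * r), pow_succ r k,
        pow_succ r (k + n)]

end cantorGap

section cantorStage

variable {N : ℕ}

lemma cantorRatio_pos (hN : 2 ≤ N) : 0 < cantorRatio N := by
  have : (2 : ℝ) ≤ N := by exact_mod_cast hN
  unfold cantorRatio
  apply div_pos <;> linarith

lemma two_mul_cantorRatio_lt_one (N : ℕ) : 2 * cantorRatio N < 1 := by
  rcases N.eq_zero_or_pos with rfl | hN
  · norm_num [cantorRatio]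
  · have : (0 : ℝ) < N := by exact_mod_cast hN
    rw [cantorRatio, mul_div_assoc', div_lt_one (by positivity)]
    linarith

lemma one_sub_cantorRatio (hN : N ≠ 0) : 1 - cantorRatio N = (N + 1) / (2 * N) := by
  unfold cantorRatio
  field_simp
  ring

lemma cantorStage_eq_biUnion (hN : 2 ≤ N) (m : ℕ) : cantorStage N m =
    ⋃ x ∈ cantorLeftEnds (cantorRatio N) m, Icc x (x + cantorRatio N ^ m) := by
  have hr0 : 0 < cantorRatio N := cantorRatio_pos hN
  induction m with
  | zero => simp [cantorStage, cantorLeftEnds]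
  | succ m ih =>
    rw [cantorStage, ← one_sub_cantorRatio (by omega), ih, image_iUnion₂, image_iUnion₂,
      cantorLeftEnds.succ, Finset.set_biUnion_union, Finset.set_biUnion_finset_image,
      Finset.set_biUnion_finset_image]
    generalize cantorRatio N = r at hr0 ⊢
    congr 1 <;> refine iUnion₂_congr fun x _ => ?_
    · rw [image_mul_left_Icc' hr0, mul_add, pow_succ']
    · rw [image_affine_Icc' hr0, pow_succ']
      congr 1; ring

lemma cantorStage_sdiff_succ (hN : 2 ≤ N) (m : ℕ) :
    cantorStage N m \ cantorStage N (m + 1) =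
      ⋃ x ∈ cantorLeftEnds (cantorRatio N) m, cantorGap (cantorRatio N) m x := by
  have hr0 : 0 < cantorRatio N := cantorRatio_pos hN
  have hr1 : 2 * cantorRatio N < 1 := two_mul_cantorRatio_lt_one N
  rw [cantorStage_eq_biUnion hN, cantorStage_eq_biUnion hN, cantorLeftEnds.succ_eq_union_image,
    Finset.set_biUnion_union, Finset.set_biUnion_finset_image]
  generalize cantorRatio N = r at hr0 hr1 ⊢
  have hend : ∀ x, x + (1 - r) * r ^ m + r ^ (m + 1) = x + r ^ m := fun x => by
    rw [pow_succ]; ring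
  simp only [hend, ← iUnion_union_distrib, ← Finset.set_biUnion_coe]
  rw [biUnion_sdiff_biUnion_of_pairwiseDisjoint (cantorLeftEnds.pairwiseDisjoint_Icc hr0 hr1 m)]
  · refine iUnion₂_congr fun x _ => Icc_sdiff_Icc_union_Icc ?_ ?_ <;>
      nlinarith [pow_succ r m, pow_pos hr0 m]
  · intro x _
    apply union_subset <;> apply Icc_subset_Icc <;> nlinarith [pow_succ r m, pow_pos hr0 m]

end cantorStage

theorem stmt3_general (N : ℕ) (hN : 3 ≤ N) (k L : ℕ) (hL : k < L)
    (I : Fin (2 ^ (L - 1)) → Set ℝ)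
    (hopen : ∀ j, ∃ p q : ℝ, p < q ∧ I j = Set.Ioo p q)
    (hrem : (⋃ j, I j) = cantorStage N (L - 1) \ cantorStage N L)
    (a : ℝ) :
    Nat.card {j : Fin (2 ^ (L - 1)) // (I j ∩ Set.Icc a (a + cantorRatio N ^ k)).Nonempty} ≤
      2 ^ (L - k - 1) := by
  obtain ⟨n, rfl⟩ : ∃ n, L = k + n + 1 := ⟨L - k - 1, by omega⟩
  change ⋃ j, I j = cantorStage N (k + n) \ cantorStage N (k + n + 1) at hrem
  rw [cantorStage_sdiff_succ (by omega), ← Finset.set_biUnion_coe, biUnion_eq_iUnion] at hrem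
  have hr0 : 0 < cantorRatio N := cantorRatio_pos (by omega)
  have hr1 : 2 * cantorRatio N < 1 := two_mul_cantorRatio_lt_one N
  generalize cantorRatio N = r at hr0 hr1 hrem ⊢
  obtain ⟨e, he⟩ := exists_equiv_forall_subset_of_iUnion_eq
    (G := fun x : cantorLeftEnds r (k + n) => cantorGap r (k + n) x)
    (by rw [Nat.card_fin, Nat.card_eq_finsetCard, cantorLeftEnds.card hr0 hr1.le,
      Nat.add_sub_cancel])
    (fun j => by obtain ⟨p, q, -, hI⟩ := hopen j; exact hI ▸ isPreconnected_Ioo)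
    (fun j => by obtain ⟨p, q, hpq, hI⟩ := hopen j; exact hI ▸ nonempty_Ioo.mpr hpq)
    (fun _ => isOpen_Ioo) (fun x => cantorGap_nonempty hr0 hr1 x)
    (pairwise_disjoint_cantorGap hr0 hr1 _) hrem
  calc Nat.card {j // (I j ∩ Icc a (a + r ^ k)).Nonempty}
      ≤ Nat.card {x : cantorLeftEnds r (k + n) //
          (cantorGap r (k + n) x ∩ Icc a (a + r ^ k)).Nonempty} :=
        Nat.card_le_card_of_injective
          (fun j => ⟨e j, j.2.mono (inter_subset_inter_left _ (he j))⟩)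
          fun i j hij => Subtype.ext <| e.injective <| Subtype.mk.inj hij
    _ ≤ 2 ^ n := natCard_cantorGap_inter_Icc_nonempty_le hr0 hr1.le k n a
    _ = 2 ^ (k + n + 1 - k - 1) := by congr 1; omega

theorem stmt3 (N : ℕ) (hN : 3 ≤ N) (k L : ℕ) (hk : 1 ≤ k) (hL : k < L)
    (I : Fin (2 ^ (L - 1)) → Set ℝ)
    (hopen : ∀ j, ∃ p q : ℝ, p < q ∧ I j = Set.Ioo p q)
    (hdisj : Pairwise (Function.onFun Disjoint I))
    (hrem : (⋃ j, I j) = cantorStage N (L - 1) \ cantorStage N L)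
    (a : ℝ) :
    Nat.card {j : Fin (2 ^ (L - 1)) // (I j ∩ Set.Icc a (a + cantorRatio N ^ k)).Nonempty} ≤
      2 ^ (L - k - 1) :=
  stmt3_general N hN k L hL I hopen hrem a
end

section
/- Let δ > 0 and c ≥ 0. If S is a union of k intervals of total length c, then S intersects at most 2k + c/δ pairwise disjoint intervals of length δ. More precisely, for any family of pairwise disjoint intervals each of length δ, the number of intervals in the family meeting S is at most 2k + c/δ. -/
open Set

/-! A δ-interval meeting `[a, b]` lies in `[a - δ, b + δ]`, so by comparing Lebesgue measure at
most `(b - a + 2δ) / δ` pairwise disjoint ones can meet `[a, b]`. Summing over the `k` intervals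
gives `2k + c/δ`. -/

section DisjointIntervals

open scoped Function

variable {ι : Type*} {g : ι → ℝ} {δ a b : ℝ} {s : Set ι}

open MeasureTheory in
theorem ncard_mul_le_sub_of_Icc_subset (hab : a ≤ b)
    (hs : s.PairwiseDisjoint fun i => Icc (g i) (g i + δ))
    (hsub : ∀ i ∈ s, Icc (g i) (g i + δ) ⊆ Icc a b) :
    (s.ncard : ℝ) * δ ≤ b - a := by
  obtain hinf | hfin := s.infinite_or_finite
  · simpa [hinf.ncard] using hab
  obtain ⟨F, rfl⟩ := hfin.exists_finset_coe
  have hvol : (F.card : ENNReal) * ENNReal.ofReal δ ≤ ENNReal.ofReal (b - a) := by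
    calc (F.card : ENNReal) * ENNReal.ofReal δ
        = volume (⋃ i ∈ F, Icc (g i) (g i + δ)) := by
          rw [measure_biUnion_finset hs fun i _ => measurableSet_Icc]
          simp [Real.volume_Icc]
      _ ≤ volume (Icc a b) := measure_mono (iUnion₂_subset hsub)
      _ = ENNReal.ofReal (b - a) := Real.volume_Icc
  rw [← ENNReal.ofReal_natCast, ← ENNReal.ofReal_mul (Nat.cast_nonneg _),
    ENNReal.ofReal_le_ofReal_iff (sub_nonneg.mpr hab)] at hvol
  simpa using hvol

theorem ncard_setOf_Icc_inter_nonempty_le (hδ : 0 < δ) (hab : a ≤ b)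
    (hdisj : Pairwise (Disjoint on fun i => Icc (g i) (g i + δ))) :
    ({i | (Icc (g i) (g i + δ) ∩ Icc a b).Nonempty}.ncard : ℝ) ≤ 2 + (b - a) / δ := by
  have hsub : ∀ i ∈ {i | (Icc (g i) (g i + δ) ∩ Icc a b).Nonempty},
      Icc (g i) (g i + δ) ⊆ Icc (a - δ) (b + δ) := by
    rintro i ⟨x, ⟨hgx, hxg⟩, hax, hxb⟩
    exact Icc_subset_Icc (by linarith) (by linarith)
  have hcount := ncard_mul_le_sub_of_Icc_subset (by linarith) (hdisj.set_pairwise _) hsub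
  rw [← le_div_iff₀ hδ] at hcount
  calc _ ≤ (b + δ - (a - δ)) / δ := hcount
    _ = 2 + (b - a) / δ := by field_simp; ring

end DisjointIntervals

theorem stmt5_general (k : ℕ) (c δ : ℝ) (hδ : 0 < δ)
    (f : Fin k → ℝ × ℝ) (hf : ∀ i, (f i).1 ≤ (f i).2)
    (hsum : ∑ i, ((f i).2 - (f i).1) = c)
    (ι : Type*) (g : ι → ℝ)
    (hdisj : Pairwise (Function.onFun Disjoint fun i => Set.Icc (g i) (g i + δ))) :
    (Nat.card {i : ι // (Set.Icc (g i) (g i + δ) ∩ ⋃ j, Set.Icc (f j).1 (f j).2).Nonempty} : ℝ) ≤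
      2 * k + c / δ := by
  have hunion : {i | (Icc (g i) (g i + δ) ∩ ⋃ j, Icc (f j).1 (f j).2).Nonempty} =
      ⋃ j, {i | (Icc (g i) (g i + δ) ∩ Icc (f j).1 (f j).2).Nonempty} := by
    ext i
    simp only [inter_iUnion, nonempty_iUnion, mem_ofPred_eq, mem_iUnion]
  calc (Nat.card {i : ι // (Icc (g i) (g i + δ) ∩ ⋃ j, Icc (f j).1 (f j).2).Nonempty} : ℝ)
      = ({i | (Icc (g i) (g i + δ) ∩ ⋃ j, Icc (f j).1 (f j).2).Nonempty}.ncard : ℝ) :=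
        congrArg _ (Nat.card_coe_set_eq _)
    _ ≤ ∑ j, ({i | (Icc (g i) (g i + δ) ∩ Icc (f j).1 (f j).2).Nonempty}.ncard : ℝ) := by
        rw [hunion]
        exact_mod_cast ncard_iUnion_le_of_fintype _
    _ ≤ ∑ j, (2 + ((f j).2 - (f j).1) / δ) :=
        Finset.sum_le_sum fun j _ => ncard_setOf_Icc_inter_nonempty_le hδ (hf j) hdisj
    _ = 2 * k + c / δ := by
        rw [Finset.sum_add_distrib, ← Finset.sum_div, hsum]
        simp [mul_comm]

theorem stmt5 (k : ℕ) (c δ : ℝ) (hδ : 0 < δ) (hc : 0 ≤ c)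
    (f : Fin k → ℝ × ℝ) (hf : ∀ i, (f i).1 ≤ (f i).2)
    (hsum : ∑ i, ((f i).2 - (f i).1) = c)
    (ι : Type*) (g : ι → ℝ)
    (hdisj : Pairwise (Function.onFun Disjoint fun i => Set.Icc (g i) (g i + δ))) :
    (Nat.card {i : ι // (Set.Icc (g i) (g i + δ) ∩ ⋃ j, Set.Icc (f j).1 (f j).2).Nonempty} : ℝ) ≤
      2 * k + c / δ :=
  stmt5_general k c δ hδ f hf hsum ι g hdisj
end
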